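/- Caro–Wei theorem: every finite simple undirected graph G = (V, E) contains an independent set of size at least ∑_{v ∈ V} 1/(1 + deg(v)). -/

import Mathlib

/-!
Greedy argument: pick a vertex `v` of minimum degree, put it into the independent set and delete
its closed neighbourhood `N[v]`. Every vertex of `N[v]` has degree at least `deg v`, and
`|N[v]| = 1 + deg v`, so the deleted vertices carry total weight `∑ 1 / (1 + deg u) ≤ 1`, while
the weights of the remaining vertices can only grow, since their degrees drop. Induction on the
number of vertices finishes the proof.
-/

open Finset

namespace SimpleGraph

variable {V : Type*} {G : SimpleGraph V}

lemma isIndepSet_insert_of_forall_not_adj [DecidableEq V] {I : Finset V} {v : V}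
    (hI : G.IsIndepSet (I : Set V)) (hv : ∀ w ∈ I, ¬G.Adj v w) :
    G.IsIndepSet (insert v I : Finset V) := by
  rw [coe_insert, IsIndepSet, Set.pairwise_insert]
  exact ⟨hI, fun w hw _ => ⟨hv w hw, fun hwv => hv w hw hwv.symm⟩⟩

variable [DecidableRel G.Adj]

variable (G) in
/-- `#{w ∈ s | G.Adj v w}` is the degree of `v` in the induced subgraph `G[s]`. -/
noncomputable def caroWeiBound (s : Finset V) : ℝ :=
  ∑ v ∈ s, 1 / (1 + (#{w ∈ s | G.Adj v w} : ℝ))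

lemma sum_le_caroWeiBound_of_subset {s t : Finset V} (hts : t ⊆ s) :
    ∑ u ∈ t, 1 / (1 + (#{w ∈ s | G.Adj u w} : ℝ)) ≤ G.caroWeiBound t := by
  refine sum_le_sum fun u _ => one_div_le_one_div_of_le (by positivity) ?_
  gcongr

lemma sum_closedNeighborhood_le_one [DecidableEq V] {s : Finset V} {v : V}
    (hmin : ∀ u ∈ s, #{w ∈ s | G.Adj v w} ≤ #{w ∈ s | G.Adj u w}) (hv : v ∈ s) :
    ∑ u ∈ insert v {w ∈ s | G.Adj v w}, 1 / (1 + (#{w ∈ s | G.Adj u w} : ℝ)) ≤ 1 := by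
  have hcard : (#(insert v {w ∈ s | G.Adj v w}) : ℝ) = 1 + #{w ∈ s | G.Adj v w} := by
    rw [card_insert_of_notMem (by simp), Nat.cast_succ, add_comm]
  calc ∑ u ∈ insert v {w ∈ s | G.Adj v w}, 1 / (1 + (#{w ∈ s | G.Adj u w} : ℝ))
      ≤ ∑ _u ∈ insert v {w ∈ s | G.Adj v w}, 1 / (1 + (#{w ∈ s | G.Adj v w} : ℝ)) := by
        refine sum_le_sum fun u hu => one_div_le_one_div_of_le (by positivity) ?_
        have hus : u ∈ s := by
          rcases mem_insert.mp hu with rfl | hu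
          exacts [hv, (mem_filter.mp hu).1]
        exact add_le_add_right (by exact_mod_cast hmin u hus) 1
    _ = 1 := by
        rw [sum_const, nsmul_eq_mul, hcard, mul_one_div_cancel (by positivity)]

lemma caroWeiBound_le_sdiff_closedNeighborhood_add_one [DecidableEq V] {s : Finset V} {v : V}
    (hmin : ∀ u ∈ s, #{w ∈ s | G.Adj v w} ≤ #{w ∈ s | G.Adj u w}) (hv : v ∈ s) :
    G.caroWeiBound s ≤ G.caroWeiBound (s \ insert v {w ∈ s | G.Adj v w}) + 1 := by
  have hsub : insert v {w ∈ s | G.Adj v w} ⊆ s := insert_subset hv (filter_subset _ _)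
  rw [caroWeiBound, ← sum_sdiff hsub]
  exact add_le_add (sum_le_caroWeiBound_of_subset sdiff_subset)
    (sum_closedNeighborhood_le_one hmin hv)

theorem exists_isIndepSet_subset_caroWeiBound_le [DecidableEq V] (s : Finset V) :
    ∃ I ⊆ s, G.IsIndepSet (I : Set V) ∧ G.caroWeiBound s ≤ #I := by
  induction s using Finset.strongInduction with
  | H s ih =>
  rcases s.eq_empty_or_nonempty with rfl | hne
  · exact ⟨∅, Subset.rfl, by simp [IsIndepSet], by simp [caroWeiBound]⟩
  obtain ⟨v, hv, hmin⟩ := s.exists_min_image (fun u => #{w ∈ s | G.Adj u w}) hne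
  set t := s \ insert v {w ∈ s | G.Adj v w}
  have hvt : v ∉ t := fun h => (mem_sdiff.mp h).2 (mem_insert_self _ _)
  obtain ⟨I, hIt, hI, hbound⟩ :=
    ih t (Finset.ssubset_iff_subset_ne.mpr ⟨sdiff_subset, fun h => hvt (h ▸ hv)⟩)
  have hvI : v ∉ I := fun h => hvt (hIt h)
  have hnadj : ∀ w ∈ I, ¬G.Adj v w := fun w hw hvw => by
    obtain ⟨hws, hwN⟩ := mem_sdiff.mp (hIt hw)
    exact hwN (mem_insert_of_mem (mem_filter.mpr ⟨hws, hvw⟩))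
  refine ⟨insert v I, insert_subset hv (hIt.trans sdiff_subset),
    isIndepSet_insert_of_forall_not_adj hI hnadj, ?_⟩
  rw [card_insert_of_notMem hvI, Nat.cast_succ]
  linarith [caroWeiBound_le_sdiff_closedNeighborhood_add_one hmin hv]

lemma caroWeiBound_univ [Fintype V] :
    G.caroWeiBound univ = ∑ v : V, 1 / (1 + (G.degree v : ℝ)) := by
  simp only [caroWeiBound, ← card_neighborFinset_eq_degree, neighborFinset_eq_filter]

end SimpleGraph

/-- Caro–Wei theorem: every finite simple graph contains an independent set of size at least
`∑_v 1 / (1 + deg v)`. -/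
theorem caro_wei {V : Type*} [Fintype V] [DecidableEq V]
    (G : SimpleGraph V) [DecidableRel G.Adj] :
    ∃ I : Finset V, (∀ u ∈ I, ∀ w ∈ I, ¬ G.Adj u w) ∧
      ∑ v : V, (1 : ℝ) / (1 + (G.degree v : ℝ)) ≤ (I.card : ℝ) := by
  obtain ⟨I, -, hI, hbound⟩ := G.exists_isIndepSet_subset_caroWeiBound_le univ
  refine ⟨I, fun u hu w hw huw => ?_, G.caroWeiBound_univ ▸ hbound⟩
  exact hI hu hw (G.ne_of_adj huw) huw
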